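/- arXiv:2002.10206 — 2 statements merged into one kernel-verified Lean document; each statement's English description precedes it below -/
import Mathlib

section
/- For a standard normal distribution function Φ, the inequality (1/√(2π))·∫_{−x}^{x} e^{−s²/2} ds > √(1 − e^{−x²/2}) holds for all x > 0. -/
/-!
The square `[-x, x]²` strictly contains the disk of radius `x`. Integrating the planar Gaussian
`exp (-(s² + t²) / 2)` over the square gives `(∫_{-x}^x exp (-s² / 2) ds)²` by Fubini, and over
the disk gives `2π (1 - exp (-x² / 2))` in polar coordinates; the corner outside the disk
contributes a positive amount.
-/

open Real MeasureTheory Set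

theorem integral_mul_exp_neg_sq_div_two (x : ℝ) :
    ∫ r in (0 : ℝ)..x, r * exp (-r ^ 2 / 2) = 1 - exp (-x ^ 2 / 2) := by
  have hderiv (r : ℝ) : HasDerivAt (fun r => -exp (-r ^ 2 / 2)) (r * exp (-r ^ 2 / 2)) r :=
    ((hasDerivAt_pow 2 r).neg.div_const 2).exp.neg.congr_deriv
      (by simp only [Pi.neg_apply]; push_cast; ring)
  rw [intervalIntegral.integral_eq_sub_of_hasDerivAt (fun r _ => hderiv r)
    (by apply Continuous.intervalIntegrable; fun_prop)]
  simp only [ne_eq, OfNat.ofNat_ne_zero, not_false_eq_true, zero_pow, neg_zero, zero_div, exp_zero]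
  ring

theorem integral_exp_neg_sq_div_two_disk (x : ℝ) :
    ∫ p in {p : ℝ × ℝ | p.1 ^ 2 + p.2 ^ 2 < x ^ 2}, exp (-p.1 ^ 2 / 2) * exp (-p.2 ^ 2 / 2) =
      2 * π * (1 - exp (-x ^ 2 / 2)) := by
  have hdisk : MeasurableSet {p : ℝ × ℝ | p.1 ^ 2 + p.2 ^ 2 < x ^ 2} :=
    measurableSet_lt (by fun_prop) (by fun_prop)
  have hpolar : ∀ p ∈ polarCoord.target,
      p.1 • {p : ℝ × ℝ | p.1 ^ 2 + p.2 ^ 2 < x ^ 2}.indicator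
          (fun p => exp (-p.1 ^ 2 / 2) * exp (-p.2 ^ 2 / 2)) (polarCoord.symm p) =
        (Iio |x|).indicator (fun r => r * exp (-r ^ 2 / 2)) p.1 * (fun _ => (1 : ℝ)) p.2 := by
    rintro ⟨r, θ⟩ ⟨hr, -⟩
    have hr : 0 < r := hr
    have hsq : (r * cos θ) ^ 2 + (r * sin θ) ^ 2 = r ^ 2 := by
      linear_combination r ^ 2 * sin_sq_add_cos_sq θ
    have hlt : r ^ 2 < x ^ 2 ↔ r < |x| := by
      rw [← sq_abs x]; exact pow_lt_pow_iff_left₀ hr.le (abs_nonneg x) two_ne_zero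
    simp only [polarCoord_symm_apply, indicator, mem_ofPred_eq, mem_Iio, hsq, hlt, smul_eq_mul,
      mul_one]
    split_ifs
    · rw [← exp_add]; congr 2; linear_combination hsq / (-2)
    · simp
  rw [← integral_indicator hdisk, ← integral_comp_polarCoord_symm,
    setIntegral_congr_fun polarCoord.open_target.measurableSet hpolar, polarCoord_target,
    Measure.volume_eq_prod, setIntegral_prod_mul _ (fun _ => (1 : ℝ)),
    setIntegral_indicator measurableSet_Iio, Ioi_inter_Iio, ← integral_Ioc_eq_integral_Ioo,
    ← intervalIntegral.integral_of_le (abs_nonneg x), integral_mul_exp_neg_sq_div_two, sq_abs]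
  simp only [integral_const, MeasurableSet.univ, measureReal_restrict_apply, univ_inter,
    Real.volume_real_Ioo_of_le (neg_le_self pi_pos.le), smul_eq_mul, mul_one]
  ring

theorem disk_subset_Ioc_prod_Ioc {x : ℝ} (hx : 0 ≤ x) :
    {p : ℝ × ℝ | p.1 ^ 2 + p.2 ^ 2 < x ^ 2} ⊆ Ioc (-x) x ×ˢ Ioc (-x) x := by
  intro p (hp : p.1 ^ 2 + p.2 ^ 2 < x ^ 2)
  have h1 : |p.1| < x := abs_lt_of_sq_lt_sq (by nlinarith [sq_nonneg p.2]) hx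
  have h2 : |p.2| < x := abs_lt_of_sq_lt_sq (by nlinarith [sq_nonneg p.1]) hx
  rw [abs_lt] at h1 h2
  exact ⟨⟨h1.1, h1.2.le⟩, ⟨h2.1, h2.2.le⟩⟩

-- The corner lies outside the disk because `2 * (3 / 4) ^ 2 > 1`.
theorem disjoint_disk_Ioc_prod_Ioc {x : ℝ} (hx : 0 ≤ x) :
    Disjoint {p : ℝ × ℝ | p.1 ^ 2 + p.2 ^ 2 < x ^ 2}
      (Ioc (3 * x / 4) x ×ˢ Ioc (3 * x / 4) x) := by
  rw [Set.disjoint_left]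
  rintro p hp ⟨⟨h1, -⟩, ⟨h2, -⟩⟩
  have hp : p.1 ^ 2 + p.2 ^ 2 < x ^ 2 := hp
  have : (3 * x / 4) ^ 2 < p.1 ^ 2 := by gcongr
  have : (3 * x / 4) ^ 2 < p.2 ^ 2 := by gcongr
  nlinarith

theorem two_pi_mul_one_sub_exp_lt_sq_intervalIntegral {x : ℝ} (hx : 0 < x) :
    2 * π * (1 - exp (-x ^ 2 / 2)) < (∫ s in -x..x, exp (-s ^ 2 / 2)) ^ 2 := by
  set G : ℝ × ℝ → ℝ := fun p => exp (-p.1 ^ 2 / 2) * exp (-p.2 ^ 2 / 2)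
  set disk := {p : ℝ × ℝ | p.1 ^ 2 + p.2 ^ 2 < x ^ 2}
  set corner := Ioc (3 * x / 4) x ×ˢ Ioc (3 * x / 4) x
  have hG : Integrable G := by
    have h : Integrable fun s : ℝ => exp (-s ^ 2 / 2) := by
      simpa [div_eq_inv_mul] using integrable_exp_neg_mul_sq (by norm_num : (0 : ℝ) < 1 / 2)
    rw [Measure.volume_eq_prod]
    exact h.mul_prod h
  have hsquare {a b : ℝ} (hab : a ≤ b) :
      ∫ p in Ioc a b ×ˢ Ioc a b, G p = (∫ s in a..b, exp (-s ^ 2 / 2)) ^ 2 := by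
    rw [Measure.volume_eq_prod, setIntegral_prod_mul (fun s => exp (-s ^ 2 / 2))
      (fun s => exp (-s ^ 2 / 2)), intervalIntegral.integral_of_le hab, sq]
  have hcorner : 0 < ∫ p in corner, G p := by
    rw [hsquare (by linarith)]
    exact pow_pos (intervalIntegral.intervalIntegral_pos_of_pos_on
      (by apply Continuous.intervalIntegrable; fun_prop) (fun _ _ => exp_pos _) (by linarith)) 2
  have hsub : disk ∪ corner ⊆ Ioc (-x) x ×ˢ Ioc (-x) x :=
    union_subset (disk_subset_Ioc_prod_Ioc hx.le)
      (prod_mono (Ioc_subset_Ioc_left (by linarith)) (Ioc_subset_Ioc_left (by linarith)))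
  calc 2 * π * (1 - exp (-x ^ 2 / 2)) = ∫ p in disk, G p :=
        (integral_exp_neg_sq_div_two_disk x).symm
    _ < (∫ p in disk, G p) + ∫ p in corner, G p := lt_add_of_pos_right _ hcorner
    _ = ∫ p in disk ∪ corner, G p :=
        (setIntegral_union (disjoint_disk_Ioc_prod_Ioc hx.le)
          (measurableSet_Ioc.prod measurableSet_Ioc) hG.integrableOn hG.integrableOn).symm
    _ ≤ ∫ p in Ioc (-x) x ×ˢ Ioc (-x) x, G p :=
        setIntegral_mono_set hG.integrableOn (ae_of_all _ fun _ => by positivity)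
          hsub.eventuallyLE
    _ = (∫ s in -x..x, exp (-s ^ 2 / 2)) ^ 2 := hsquare (by linarith)

theorem gaussian_integral_lower_bound (x : ℝ) (hx : 0 < x) :
    (1 / Real.sqrt (2 * Real.pi)) * ∫ s in (-x)..x, Real.exp (-s ^ 2 / 2) >
      Real.sqrt (1 - Real.exp (-x ^ 2 / 2)) := by
  have hI : 0 < ∫ s in (-x)..x, exp (-s ^ 2 / 2) :=
    intervalIntegral.intervalIntegral_pos_of_pos_on
      (by apply Continuous.intervalIntegrable; fun_prop) (fun _ _ => exp_pos _) (by linarith)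
  rw [gt_iff_lt, one_div_mul_eq_div, sqrt_lt' (by positivity), div_pow, sq_sqrt (by positivity),
    lt_div_iff₀ (by positivity)]
  linarith [two_pi_mul_one_sub_exp_lt_sq_intervalIntegral hx]
end

section
/- Equivalently to the previous Gaussian bound: for x > 0, Φ(x) > 1/2 + (1/2)·√(1 − e^{−x²/2}), where Φ(x) = (1/√(2π))∫_{−∞}^{x} e^{−s²/2} ds. -/
open Real MeasureTheory Set intervalIntegral

/-!
Write `I x = ∫₀ˣ e^{-s²/2} ds` and `J x = ∫₀¹ e^{-x²(1+t²)/2} / (1+t²) dt`. Differentiating under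
the integral sign and substituting `s = x t` gives `J' = -e^{-x²/2} I = -(I²)'/2`, so `I² + 2J` is
constant, equal to its value `π/2` at `0`. Bounding the factor `e^{-x²t²/2}` in `J x` by `1` gives
`J x < e^{-x²/2} π/4` for `x ≠ 0`, hence `I x ^ 2 > (π/2)(1 - e^{-x²/2})`; finally
`Φ x = 1/2 + I x / √(2π)`.
-/

noncomputable def gaussIntegralFromZero (x : ℝ) : ℝ := ∫ s in (0 : ℝ)..x, exp (-s ^ 2 / 2)

noncomputable def gaussFeynmanIntegral (x : ℝ) : ℝ :=
  ∫ t in (0 : ℝ)..1, exp (-x ^ 2 * (1 + t ^ 2) / 2) / (1 + t ^ 2)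

lemma exp_neg_sq_mul_one_add_sq_div_two (x t : ℝ) :
    exp (-x ^ 2 * (1 + t ^ 2) / 2) = exp (-x ^ 2 / 2) * exp (-(x * t) ^ 2 / 2) := by
  rw [← exp_add]; ring_nf

lemma integral_one_div_one_add_sq_zero_one : ∫ t in (0 : ℝ)..1, 1 / (1 + t ^ 2) = π / 4 := by
  simp [arctan_one]

lemma hasDerivAt_gaussIntegralFromZero (x : ℝ) :
    HasDerivAt gaussIntegralFromZero (exp (-x ^ 2 / 2)) x :=
  integral_hasDerivAt_right ((by fun_prop : Continuous _).intervalIntegrable _ _)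
    (Continuous.stronglyMeasurableAtFilter (by fun_prop) _ _) (by fun_prop)

lemma mul_integral_exp_neg_mul_sq_div_two (x : ℝ) :
    x * ∫ t in (0 : ℝ)..1, exp (-(x * t) ^ 2 / 2) = gaussIntegralFromZero x := by
  simpa [gaussIntegralFromZero] using
    smul_integral_comp_mul_left (fun s => exp (-s ^ 2 / 2)) x (a := 0) (b := 1)

lemma hasDerivAt_gaussFeynmanIntegral (x : ℝ) :
    HasDerivAt gaussFeynmanIntegral (-exp (-x ^ 2 / 2) * gaussIntegralFromZero x) x := by
  have hpos : ∀ t : ℝ, 1 + t ^ 2 ≠ 0 := fun t => by positivity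
  have hdiff : HasDerivAt gaussFeynmanIntegral
      (∫ t in (0 : ℝ)..1, -x * exp (-x ^ 2 * (1 + t ^ 2) / 2)) x := by
    refine (hasDerivAt_integral_of_dominated_loc_of_deriv_le
      (F := fun y t => exp (-y ^ 2 * (1 + t ^ 2) / 2) / (1 + t ^ 2))
      (F' := fun y t => -y * exp (-y ^ 2 * (1 + t ^ 2) / 2)) (bound := fun _ => |x| + 1)
      (Metric.ball_mem_nhds x one_pos) (Filter.Eventually.of_forall fun y =>
        (Continuous.aestronglyMeasurable (by fun_prop (disch := exact hpos))))
      (Continuous.intervalIntegrable (by fun_prop (disch := exact hpos)) _ _)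
      (Continuous.aestronglyMeasurable (by fun_prop)) ?_ intervalIntegrable_const ?_).2
    · refine Filter.Eventually.of_forall fun t _ y hy => ?_
      have hexp : exp (-y ^ 2 * (1 + t ^ 2) / 2) ≤ 1 :=
        exp_le_one_iff.2 (by nlinarith [sq_nonneg y])
      have hy : |y| ≤ |x| + 1 := by
        have := abs_sub_abs_le_abs_sub y x
        rw [← Real.dist_eq] at this
        linarith [Metric.mem_ball.1 hy]
      rw [norm_mul, norm_neg, norm_of_nonneg (exp_pos _).le, Real.norm_eq_abs]
      nlinarith [abs_nonneg y]
    · refine Filter.Eventually.of_forall fun t _ y _ => ?_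
      have hinner : HasDerivAt (fun y : ℝ => -y ^ 2 * (1 + t ^ 2) / 2) (-y * (1 + t ^ 2)) y :=
        (((hasDerivAt_pow 2 y).neg.mul_const (1 + t ^ 2)).div_const 2).congr_deriv (by ring)
      exact (hinner.exp.div_const _).congr_deriv (by field_simp [hpos t])
  convert hdiff using 1
  simp_rw [exp_neg_sq_mul_one_add_sq_div_two x, ← mul_integral_exp_neg_mul_sq_div_two,
    ← intervalIntegral.integral_const_mul]
  congr 1 with t
  ring

theorem gaussIntegralFromZero_sq_add_two_mul_gaussFeynmanIntegral (x : ℝ) :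
    gaussIntegralFromZero x ^ 2 + 2 * gaussFeynmanIntegral x = π / 2 := by
  have hderiv (y : ℝ) :
      HasDerivAt (fun z => gaussIntegralFromZero z ^ 2 + 2 * gaussFeynmanIntegral z) 0 y :=
    (((hasDerivAt_gaussIntegralFromZero y).pow 2).add
      ((hasDerivAt_gaussFeynmanIntegral y).const_mul 2)).congr_deriv (by ring)
  have hzero : gaussIntegralFromZero 0 ^ 2 + 2 * gaussFeynmanIntegral 0 = π / 2 := by
    simp [gaussIntegralFromZero, gaussFeynmanIntegral]
    ring
  rw [← hzero]
  exact is_const_of_deriv_eq_zero (fun z => (hderiv z).differentiableAt) (fun z => (hderiv z).deriv)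
    x 0

lemma gaussFeynmanIntegral_lt {x : ℝ} (hx : x ≠ 0) :
    gaussFeynmanIntegral x < exp (-x ^ 2 / 2) * (π / 4) := by
  have hpos : ∀ t : ℝ, 1 + t ^ 2 ≠ 0 := fun t => by positivity
  have hfactor : gaussFeynmanIntegral x =
      exp (-x ^ 2 / 2) * ∫ t in (0 : ℝ)..1, exp (-(x * t) ^ 2 / 2) / (1 + t ^ 2) := by
    simp_rw [gaussFeynmanIntegral, exp_neg_sq_mul_one_add_sq_div_two x, mul_div_assoc,
      intervalIntegral.integral_const_mul]
  rw [hfactor, ← integral_one_div_one_add_sq_zero_one]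
  gcongr
  refine integral_lt_integral_of_continuousOn_of_le_of_exists_lt one_pos
    (Continuous.continuousOn (by fun_prop (disch := exact hpos)))
    (Continuous.continuousOn (by fun_prop (disch := exact hpos))) (fun t _ => ?_) ⟨1, by simp, ?_⟩
  · gcongr
    exact exp_le_one_iff.2 (by nlinarith [sq_nonneg (x * t)])
  · gcongr
    exact exp_lt_one_iff.2 (by linarith [sq_pos_of_ne_zero hx])

lemma pi_div_two_mul_one_sub_exp_lt_gaussIntegralFromZero_sq {x : ℝ} (hx : x ≠ 0) :
    π / 2 * (1 - exp (-x ^ 2 / 2)) < gaussIntegralFromZero x ^ 2 := by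
  linarith [gaussIntegralFromZero_sq_add_two_mul_gaussFeynmanIntegral x, gaussFeynmanIntegral_lt hx]

lemma gaussIntegralFromZero_pos {x : ℝ} (hx : 0 < x) : 0 < gaussIntegralFromZero x :=
  intervalIntegral_pos_of_pos_on ((by fun_prop : Continuous _).intervalIntegrable _ _)
    (fun _ _ => exp_pos _) hx

lemma integrable_exp_neg_sq_div_two : Integrable fun s : ℝ => exp (-s ^ 2 / 2) := by
  simpa [neg_div, div_eq_inv_mul] using integrable_exp_neg_mul_sq (b := 1 / 2) (by norm_num)

lemma integral_Iic_zero_exp_neg_sq_div_two :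
    ∫ s in Iic (0 : ℝ), exp (-s ^ 2 / 2) = sqrt (2 * π) / 2 := by
  have := integral_comp_neg_Iic 0 fun s => exp (-(1 / 2) * s ^ 2)
  simp only [neg_zero, integral_gaussian_Ioi, neg_sq] at this
  rw [div_div_eq_mul_div, div_one, mul_comm] at this
  simpa [neg_div, div_eq_inv_mul] using this

lemma integral_Iic_exp_neg_sq_div_two (x : ℝ) :
    ∫ s in Iic x, exp (-s ^ 2 / 2) = sqrt (2 * π) / 2 + gaussIntegralFromZero x := by
  rw [← integral_Iic_zero_exp_neg_sq_div_two, gaussIntegralFromZero,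
    ← integral_Iic_sub_Iic integrable_exp_neg_sq_div_two.integrableOn
      integrable_exp_neg_sq_div_two.integrableOn]
  ring

theorem gaussian_cdf_lower_bound (x : ℝ) (hx : 0 < x) :
    (1 / Real.sqrt (2 * Real.pi)) * ∫ s in Set.Iic x, Real.exp (-s ^ 2 / 2) >
      1 / 2 + (1 / 2) * Real.sqrt (1 - Real.exp (-x ^ 2 / 2)) := by
  have hbound : 1 / 2 * sqrt (1 - exp (-x ^ 2 / 2)) < gaussIntegralFromZero x / sqrt (2 * π) := by
    rw [lt_div_iff₀ (by positivity)]
    refine (pow_lt_pow_iff_left₀ (by positivity) (gaussIntegralFromZero_pos hx).le two_ne_zero).1 ?_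
    have hexp : exp (-x ^ 2 / 2) ≤ 1 := exp_le_one_iff.2 (by nlinarith)
    rw [mul_pow, mul_pow, sq_sqrt (by linarith), sq_sqrt (by positivity)]
    linarith [pi_div_two_mul_one_sub_exp_lt_gaussIntegralFromZero_sq hx.ne']
  calc 1 / 2 + 1 / 2 * sqrt (1 - exp (-x ^ 2 / 2))
      < 1 / 2 + gaussIntegralFromZero x / sqrt (2 * π) := by linarith
    _ = 1 / sqrt (2 * π) * ∫ s in Iic x, exp (-s ^ 2 / 2) := by
      rw [integral_Iic_exp_neg_sq_div_two]
      field_simp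
end
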